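/- Let Γ be a maximal commutative subring of a ring 𝒰 and suppose x ∈ 𝒰 commutes with all of Γ; then x ∈ Γ. Conversely, in the Galois order setting: if 𝒰 is a left or right Galois Γ-order in 𝒦 (with the separation assumption (ℳℳ⁻¹)∩G = 1), then Γ is maximal commutative in 𝒰. -/

import Mathlib

section SkewDefs

variable {L : Type*} [Field L]

/-- Evaluation of `X = Σ x_ν ν ∈ L ∗ ℳ` at `a ∈ L`: `X(a) = Σ x_ν ν(a)`. -/
noncomputable def evalR (X : RingAut L →₀ L) (a : L) : L :=
  X.sum fun ν c => c * ν a

/-- Skew monoid ring multiplication on `RingAut L →₀ L`: `(xμ)(yν) = (x μ(y))(μν)`. -/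
noncomputable def skewMulR (X Y : RingAut L →₀ L) : RingAut L →₀ L :=
  X.sum fun μ x => Y.sum fun ν y => Finsupp.single (μ * ν) (x * μ y)

/-- The action of an automorphism `g` on `ℒ` by `g(aν) = g(a)(gνg⁻¹)`. -/
noncomputable def gactR (g : RingAut L) (X : RingAut L →₀ L) : RingAut L →₀ L :=
  X.sum fun ν c => Finsupp.single (g * ν * g⁻¹) (g c)

/-- Left multiplication of `X ∈ ℒ` by a scalar `k ∈ L`. -/
noncomputable def lsm (k : L) (X : RingAut L →₀ L) : RingAut L →₀ L :=
  X.sum fun ν c => Finsupp.single ν (k * c)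

/-- Right multiplication of `X ∈ ℒ` by a scalar `k ∈ L`: `(cν)·k = (c ν(k)) ν`. -/
noncomputable def rsm (X : RingAut L →₀ L) (k : L) : RingAut L →₀ L :=
  X.sum fun ν c => Finsupp.single ν (c * ν k)

/-- `K = L^G` as a subset of `L`. -/
def KSet (G : Subgroup (RingAut L)) : Set L := {x : L | ∀ g ∈ G, g x = x}

/-- `Γ = Λ^G` as a subset of `L`. -/
def GammaSet (G : Subgroup (RingAut L)) (Λ : Subring L) : Set L :=
  {a : L | a ∈ Λ ∧ ∀ g ∈ G, g a = a}

/-- `𝒰` is a left Galois `Γ`-order: for every finite-dimensional left `K`-subspace `W`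
of `𝒦` (spanned by a finite set `s` of elements of `𝒦`), `W ∩ 𝒰` is finitely generated
as a left `Γ`-module. -/
def LeftOrderProp (G : Subgroup (RingAut L)) (M : Submonoid (RingAut L)) (Λ : Subring L)
    (U : Set (RingAut L →₀ L)) : Prop :=
  ∀ s : Finset (RingAut L →₀ L),
    (∀ w ∈ s, (∀ ν, w ν ≠ 0 → ν ∈ M) ∧ (∀ g ∈ G, gactR g w = w)) →
    ∃ t : Finset (RingAut L →₀ L),
      (↑t : Set (RingAut L →₀ L)) ⊆
        {y | y ∈ AddSubgroup.closure
              {z | ∃ k ∈ KSet G, ∃ w ∈ (↑s : Set (RingAut L →₀ L)), z = lsm k w} ∧ y ∈ U} ∧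
      ∀ y ∈ U, y ∈ AddSubgroup.closure
            {z | ∃ k ∈ KSet G, ∃ w ∈ (↑s : Set (RingAut L →₀ L)), z = lsm k w} →
        y ∈ AddSubgroup.closure
            {z | ∃ γ ∈ GammaSet G Λ, ∃ w ∈ (↑t : Set (RingAut L →₀ L)), z = lsm γ w}

/-- `𝒰` is a right Galois `Γ`-order: the symmetric condition with right `K`-subspaces and
right `Γ`-modules. -/
def RightOrderProp (G : Subgroup (RingAut L)) (M : Submonoid (RingAut L)) (Λ : Subring L)
    (U : Set (RingAut L →₀ L)) : Prop :=
  ∀ s : Finset (RingAut L →₀ L),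
    (∀ w ∈ s, (∀ ν, w ν ≠ 0 → ν ∈ M) ∧ (∀ g ∈ G, gactR g w = w)) →
    ∃ t : Finset (RingAut L →₀ L),
      (↑t : Set (RingAut L →₀ L)) ⊆
        {y | y ∈ AddSubgroup.closure
              {z | ∃ k ∈ KSet G, ∃ w ∈ (↑s : Set (RingAut L →₀ L)), z = rsm w k} ∧ y ∈ U} ∧
      ∀ y ∈ U, y ∈ AddSubgroup.closure
            {z | ∃ k ∈ KSet G, ∃ w ∈ (↑s : Set (RingAut L →₀ L)), z = rsm w k} →
        y ∈ AddSubgroup.closure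
            {z | ∃ γ ∈ GammaSet G Λ, ∃ w ∈ (↑t : Set (RingAut L →₀ L)), z = rsm w γ}

end SkewDefs

/-!
If `X ∈ 𝒰` commutes with `Γ`, comparing coefficients in `Xγ = γX` shows that every `ν` in the
support of `X` fixes `Γ`, hence its fraction field `K = L^G` (the `G`-norm of a denominator is a
denominator in `Γ`), so `ν ∈ G` by Artin's theorem and `ν = 1` because `(ℳℳ⁻¹) ∩ G = 1`.
Thus `X = c` with `c ∈ K`, and all powers of `c` lie in `𝒰`. The order property, applied to the
line `K · 1`, puts them in a finitely generated `Γ`-module; clearing denominators moves them into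
`Λ`, a noetherian `Γ`-module, so `c` is integral over `Γ` and hence lies in `Λ ∩ K = Γ`.
-/

open Finsupp Submodule

theorem Finsupp.sum_single_apply {α M N : Type*} [Zero M] [AddCommMonoid N] (X : α →₀ M)
    (f : α → M → N) (hf : ∀ a, f a 0 = 0) (a : α) :
    (X.sum fun b c => single b (f b c)) a = f a (X a) := by
  classical
  simp only [sum_apply, single_apply]
  rw [sum_ite_eq']
  split_ifs with h
  · rfl
  · rw [notMem_support_iff.mp h, hf]

section SkewRing

variable {L : Type*} [Field L]

lemma lsm_apply (k : L) (X : RingAut L →₀ L) (ν : RingAut L) : lsm k X ν = k * X ν :=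
  X.sum_single_apply (fun _ c => k * c) (fun _ => mul_zero k) ν

lemma rsm_apply (X : RingAut L →₀ L) (k : L) (ν : RingAut L) : rsm X k ν = X ν * ν k :=
  X.sum_single_apply (fun ν c => c * ν k) (fun _ => zero_mul _) ν

lemma lsm_single_one (k : L) : lsm k (single 1 1) = single 1 k := by
  ext ν
  rcases eq_or_ne 1 ν with rfl | h <;> simp [lsm_apply, *]

lemma rsm_single_one (k : L) : rsm (single 1 1) k = single 1 k := by
  ext ν
  rcases eq_or_ne 1 ν with rfl | h <;> simp [rsm_apply, *]

lemma gactR_apply_one (g : RingAut L) (X : RingAut L →₀ L) : gactR g X 1 = g (X 1) := by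
  classical
  have h : ∀ ν : RingAut L, g * ν * g⁻¹ = 1 ↔ ν = 1 := fun ν => by
    rw [mul_inv_eq_one, mul_eq_left]
  simp only [gactR, Finsupp.sum_apply, single_apply, h]
  rw [sum_ite_eq']
  split_ifs with h1
  · rfl
  · rw [notMem_support_iff.mp h1, map_zero]

lemma skewMulR_single_one_right_apply (X : RingAut L →₀ L) (γ : L) (ν : RingAut L) :
    skewMulR X (single 1 γ) ν = X ν * ν γ := by
  simp only [skewMulR, mul_one, sum_single_index, mul_zero, map_zero, single_zero]
  exact X.sum_single_apply (fun ν c => c * ν γ) (fun _ => zero_mul _) ν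

lemma skewMulR_single_one_left (a : L) (Y : RingAut L →₀ L) :
    skewMulR (single 1 a) Y = a • Y := by
  ext ν
  rw [skewMulR, sum_single_index (by simp), Finsupp.smul_apply, smul_eq_mul]
  simpa using Y.sum_single_apply (fun _ c => a * c) (fun _ => mul_zero a) ν

lemma gactR_single_one (g : RingAut L) (c : L) : gactR g (single 1 c) = single 1 (g c) := by
  rw [gactR, sum_single_index (by simp)]
  simp

lemma apply_eq_of_skewMulR_comm {X : RingAut L →₀ L} {γ : L}
    (h : skewMulR X (single 1 γ) = skewMulR (single 1 γ) X) {ν : RingAut L} (hν : X ν ≠ 0) :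
    ν γ = γ := by
  have hν' := congrArg (· ν) h
  simp only [skewMulR_single_one_right_apply, skewMulR_single_one_left,
    Finsupp.smul_apply, smul_eq_mul] at hν'
  exact mul_left_cancel₀ hν (hν'.trans (mul_comm _ _))

end SkewRing

section Invariants

variable {L : Type*} [Field L] (G : Subgroup (RingAut L)) (Λ : Subring L)

def gammaSubring : Subring L where
  carrier := GammaSet G Λ
  mul_mem' ha hb := ⟨Λ.mul_mem ha.1 hb.1, fun g hg => by rw [map_mul, ha.2 g hg, hb.2 g hg]⟩
  one_mem' := ⟨Λ.one_mem, fun g _ => map_one g⟩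
  add_mem' ha hb := ⟨Λ.add_mem ha.1 hb.1, fun g hg => by rw [map_add, ha.2 g hg, hb.2 g hg]⟩
  zero_mem' := ⟨Λ.zero_mem, fun g _ => map_zero g⟩
  neg_mem' ha := ⟨Λ.neg_mem ha.1, fun g hg => by rw [map_neg, ha.2 g hg]⟩

/-- The norm `∏_{g ∈ G} g(d)` of a denominator `d ∈ Λ` of `x` is a `G`-invariant denominator. -/
lemma exists_ne_zero_mul_mem_gammaSet (hGfin : (G : Set (RingAut L)).Finite)
    (hGΛ : ∀ g ∈ G, ∀ a ∈ Λ, g a ∈ Λ) (hfrac : ∀ x : L, ∃ a ∈ Λ, ∃ b ∈ Λ, b ≠ 0 ∧ x = a / b)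
    {x : L} (hx : x ∈ KSet G) : ∃ b ∈ GammaSet G Λ, b ≠ 0 ∧ x * b ∈ GammaSet G Λ := by
  obtain ⟨a, ha, d, hd, hd0, hxad⟩ := hfrac x
  have : Fintype G := hGfin.fintype
  set N := ∏ g : G, (g : RingAut L) d with hN
  have hNΛ : N ∈ Λ := Λ.prod_mem fun g _ => hGΛ g g.2 d hd
  have hNfix : ∀ h ∈ G, h N = N := fun h hh => by
    rw [hN, map_prod]
    exact Fintype.prod_equiv (Equiv.mulLeft ⟨h, hh⟩) _ _ fun _ => rfl
  have hN0 : N ≠ 0 := Finset.prod_ne_zero_iff.mpr fun g _ => (map_ne_zero _).mpr hd0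
  have hxN : x * N ∈ Λ := by
    classical
    rw [hN, ← Finset.mul_prod_erase _ _ (Finset.mem_univ 1), hxad, ← mul_assoc]
    change a / d * d * _ ∈ Λ
    rw [div_mul_cancel₀ a hd0]
    exact Λ.mul_mem ha (Λ.prod_mem fun g _ => hGΛ g g.2 d hd)
  exact ⟨N, ⟨hNΛ, hNfix⟩, hN0, hxN, fun g hg => by rw [map_mul, hx g hg, hNfix g hg]⟩

lemma apply_eq_of_forall_gammaSet (hGfin : (G : Set (RingAut L)).Finite)
    (hGΛ : ∀ g ∈ G, ∀ a ∈ Λ, g a ∈ Λ) (hfrac : ∀ x : L, ∃ a ∈ Λ, ∃ b ∈ Λ, b ≠ 0 ∧ x = a / b)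
    {ν : RingAut L} (hν : ∀ γ ∈ GammaSet G Λ, ν γ = γ) {x : L} (hx : x ∈ KSet G) : ν x = x := by
  obtain ⟨b, hb, hb0, hxb⟩ := exists_ne_zero_mul_mem_gammaSet G Λ hGfin hGΛ hfrac hx
  have h := hν _ hxb
  rw [map_mul, hν b hb] at h
  exact mul_right_cancel₀ hb0 h

lemma mem_of_forall_kSet_apply_eq (hGfin : (G : Set (RingAut L)).Finite) {ν : RingAut L}
    (hν : ∀ x ∈ KSet G, ν x = x) : ν ∈ G := by
  have : Finite G := hGfin.to_subtype
  let ψ : L →ₐ[FixedPoints.subfield G L] L :=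
    { toRingHom := (ν : L →+* L)
      commutes' := fun r => hν r fun g hg => r.2 ⟨g, hg⟩ }
  obtain ⟨g, hg⟩ := (FixedPoints.toAlgHom_bijective G L).2 ψ
  have hνg : ν = g := RingEquiv.ext fun x => (AlgHom.congr_fun hg x).symm
  exact hνg ▸ g.2

end Invariants

section Integrality

theorem IsIntegral.of_subring_le {A : Type*} [CommRing A] {S T : Subring A} (h : S ≤ T)
    {x : A} (hx : IsIntegral S x) : IsIntegral T x := by
  let : Algebra S T := (Subring.inclusion h).toAlgebra
  have : IsScalarTower S T A := IsScalarTower.of_algebraMap_eq fun _ => rfl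
  exact hx.tower_top

theorem isIntegral_of_forall_pow_mul_mem {R A : Type*} [CommRing R] [CommRing A] [IsDomain A]
    [Algebra R A] (P : Submodule R A) [IsNoetherian R P] {b c : A} (hb : b ≠ 0)
    (h : ∀ n : ℕ, c ^ n * b ∈ P) : IsIntegral R c := by
  set N := span R (Set.range fun n : ℕ => c ^ n * b)
  have hNP : N ≤ P := span_le.mpr (Set.range_subset_iff.mpr h)
  have hbN : b ∈ N := subset_span ⟨0, by simp⟩
  have hN0 : N ≠ ⊥ := fun hN => hb ((mem_bot R).mp (hN ▸ hbN))
  refine isIntegral_of_smul_mem_submodule N hN0 (isNoetherian_submodule.mp ‹_› N hNP) c ?_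
  intro x hx
  induction hx using span_induction with
  | mem x hx =>
    obtain ⟨n, rfl⟩ := hx
    exact subset_span ⟨n + 1, by simp only [smul_eq_mul, pow_succ']; ring⟩
  | zero => simp
  | add x y _ _ hx hy => rw [smul_add]; exact add_mem hx hy
  | smul r x _ hx => rw [smul_comm]; exact N.smul_mem r hx

lemma Subring.closure_mul_le_span {A : Type*} [CommRing A] (R : Subring A) (s : Set A) :
    AddSubgroup.closure {z | ∃ r ∈ R, ∃ w ∈ s, z = r * w} ≤ (span R s).toAddSubgroup :=
  (AddSubgroup.closure_le _).mpr <| by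
    rintro _ ⟨r, hr, w, hw, rfl⟩
    exact smul_mem (span R s) (⟨r, hr⟩ : R) (subset_span hw)

variable {L : Type*} [Field L] (G : Subgroup (RingAut L)) (Λ : Subring L)

lemma exists_ne_zero_forall_mul_mem (hfrac : ∀ x : L, ∃ a ∈ Λ, ∃ b ∈ Λ, b ≠ 0 ∧ x = a / b)
    (T : Finset L) : ∃ b ∈ Λ, b ≠ 0 ∧ ∀ t ∈ T, t * b ∈ Λ := by
  choose a ha d hd hd0 had using hfrac
  refine ⟨∏ t ∈ T, d t, Λ.prod_mem fun t _ => hd t, Finset.prod_ne_zero_iff.mpr fun t _ => hd0 t,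
    fun t ht => ?_⟩
  classical
  rw [← Finset.mul_prod_erase T d ht, ← mul_assoc, (eq_div_iff (hd0 t)).mp (had t)]
  exact Λ.mul_mem (ha t) (Λ.prod_mem fun s _ => hd s)

def lambdaSubmodule : Submodule (gammaSubring G Λ) L where
  carrier := Λ
  add_mem' := Λ.add_mem
  zero_mem' := Λ.zero_mem
  smul_mem' γ _ hx := Λ.mul_mem γ.2.1 hx

lemma isNoetherian_lambdaSubmodule
    (hnoeth : ∀ N : AddSubgroup L, (N : Set L) ⊆ (Λ : Set L) →
      (∀ γ ∈ GammaSet G Λ, ∀ a ∈ N, γ * a ∈ N) →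
      ∃ s : Finset L, (↑s : Set L) ⊆ (N : Set L) ∧
        ∀ y ∈ N, y ∈ AddSubgroup.closure
          {z | ∃ γ ∈ GammaSet G Λ, ∃ w ∈ (↑s : Set L), z = γ * w}) :
    IsNoetherian (gammaSubring G Λ) (lambdaSubmodule G Λ) := by
  refine isNoetherian_submodule.mpr fun N hN => ?_
  obtain ⟨s, hsN, hNs⟩ := hnoeth N.toAddSubgroup (fun x hx => hN hx) fun γ hγ a ha =>
    N.smul_mem ⟨γ, hγ⟩ ha
  exact ⟨s, le_antisymm (span_le.mpr hsN) fun y hy =>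
    Subring.closure_mul_le_span (gammaSubring G Λ) s (hNs y hy)⟩

lemma mem_of_forall_pow_mem_span (hfrac : ∀ x : L, ∃ a ∈ Λ, ∃ b ∈ Λ, b ≠ 0 ∧ x = a / b)
    (hicl : ∀ x : L, IsIntegral Λ x → x ∈ Λ)
    [IsNoetherian (gammaSubring G Λ) (lambdaSubmodule G Λ)]
    (T : Finset L) {c : L} (hc : ∀ n : ℕ, c ^ n ∈ span (gammaSubring G Λ) (T : Set L)) :
    c ∈ Λ := by
  obtain ⟨b, -, hb0, hbT⟩ := exists_ne_zero_forall_mul_mem Λ hfrac T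
  have hspan : span (gammaSubring G Λ) (T : Set L) ≤
      (lambdaSubmodule G Λ).comap (LinearMap.mulRight (gammaSubring G Λ) b) :=
    span_le.mpr hbT
  refine hicl c (IsIntegral.of_subring_le (S := gammaSubring G Λ) (fun _ hγ => hγ.1) ?_)
  exact isIntegral_of_forall_pow_mul_mem (lambdaSubmodule G Λ) hb0 fun n => hspan (hc n)

end Integrality

section GaloisOrder

variable {L : Type*} [Field L] {G : Subgroup (RingAut L)} {M : Submonoid (RingAut L)}
  {Λ : Subring L} {U : Set (RingAut L →₀ L)}

lemma singleton_single_one_one_subset_invariants :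
    ∀ w ∈ ({single 1 1} : Finset (RingAut L →₀ L)),
      (∀ ν, w ν ≠ 0 → ν ∈ M) ∧ (∀ g ∈ G, gactR g w = w) := by
  intro w hw
  rw [Finset.mem_singleton.mp hw]
  refine ⟨fun ν hν => ?_, fun g _ => by rw [gactR_single_one, map_one]⟩
  rw [single_apply_ne_zero] at hν
  exact hν.1 ▸ M.one_mem

lemma apply_one_mem_span_of_mem_closure {R : Subring L} {T : Set L}
    {s : Set (RingAut L →₀ L)} (hs : ∀ z ∈ s, z 1 ∈ span R T) {y : RingAut L →₀ L}
    (hy : y ∈ AddSubgroup.closure s) : y 1 ∈ span R T := by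
  have hle : AddSubgroup.closure s ≤
      (span R T).toAddSubgroup.comap (applyAddHom (M := L) (1 : RingAut L)) :=
    (AddSubgroup.closure_le _).mpr hs
  exact hle hy

lemma LeftOrderProp.exists_finset_span (h : LeftOrderProp G M Λ U) :
    ∃ T : Finset L, ∀ c ∈ KSet G, single 1 c ∈ U →
      c ∈ span (gammaSubring G Λ) (T : Set L) := by
  classical
  obtain ⟨t, -, ht⟩ := h {single 1 1} singleton_single_one_one_subset_invariants
  refine ⟨t.image (· 1), fun c hc hcU => ?_⟩
  rw [← single_eq_same (a := (1 : RingAut L)) (b := c)]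
  refine apply_one_mem_span_of_mem_closure ?_ (ht _ hcU (AddSubgroup.subset_closure
    ⟨c, hc, single 1 1, Finset.mem_singleton_self _, (lsm_single_one c).symm⟩))
  rintro _ ⟨γ, hγ, w, hw, rfl⟩
  rw [lsm_apply]
  exact smul_mem _ (⟨γ, hγ⟩ : gammaSubring G Λ) (subset_span (Finset.mem_image_of_mem _ hw))

lemma RightOrderProp.exists_finset_span (h : RightOrderProp G M Λ U) :
    ∃ T : Finset L, ∀ c ∈ KSet G, single 1 c ∈ U →
      c ∈ span (gammaSubring G Λ) (T : Set L) := by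
  classical
  obtain ⟨t, -, ht⟩ := h {single 1 1} singleton_single_one_one_subset_invariants
  refine ⟨t.image (· 1), fun c hc hcU => ?_⟩
  rw [← single_eq_same (a := (1 : RingAut L)) (b := c)]
  refine apply_one_mem_span_of_mem_closure ?_ (ht _ hcU (AddSubgroup.subset_closure
    ⟨c, hc, single 1 1, Finset.mem_singleton_self _, (rsm_single_one c).symm⟩))
  rintro _ ⟨γ, hγ, w, hw, rfl⟩
  rw [rsm_apply, mul_comm]
  exact smul_mem _ (⟨γ, hγ⟩ : gammaSubring G Λ) (subset_span (Finset.mem_image_of_mem _ hw))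

end GaloisOrder

theorem stmt14_general (L : Type*) [Field L] (G : Subgroup (RingAut L))
    (hGfin : (G : Set (RingAut L)).Finite)
    (M : Submonoid (RingAut L))
    (hsep : ∀ ν₁ ∈ M, ∀ ν₂ ∈ M, ν₁ * ν₂⁻¹ ∈ G → ν₁ = ν₂)
    (Λ : Subring L)
    (hGΛ : ∀ g ∈ G, ∀ a ∈ Λ, g a ∈ Λ)
    (hfrac : ∀ x : L, ∃ a ∈ Λ, ∃ b ∈ Λ, b ≠ 0 ∧ x = a / b)
    (hicl : ∀ x : L, IsIntegral Λ x → x ∈ Λ)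
    (hnoeth : ∀ N : AddSubgroup L, (N : Set L) ⊆ (Λ : Set L) →
      (∀ γ ∈ GammaSet G Λ, ∀ a ∈ N, γ * a ∈ N) →
      ∃ s : Finset L, (↑s : Set L) ⊆ (N : Set L) ∧
        ∀ y ∈ N, y ∈ AddSubgroup.closure
          {z | ∃ γ ∈ GammaSet G Λ, ∃ w ∈ (↑s : Set L), z = γ * w})
    (U : Set (RingAut L →₀ L))
    (hUK : ∀ X ∈ U, (∀ ν, X ν ≠ 0 → ν ∈ M) ∧ (∀ g ∈ G, gactR g X = X))
    (hU1 : Finsupp.single (1 : RingAut L) (1 : L) ∈ U)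
    (hUring : ∀ X ∈ U, ∀ Y ∈ U, X - Y ∈ U ∧ skewMulR X Y ∈ U)
    (hOrd : LeftOrderProp G M Λ U ∨ RightOrderProp G M Λ U) :
    ∀ X ∈ U, (∀ γ ∈ GammaSet G Λ,
        skewMulR X (Finsupp.single (1 : RingAut L) γ)
          = skewMulR (Finsupp.single (1 : RingAut L) γ) X) →
      ∃ γ ∈ GammaSet G Λ, X = Finsupp.single (1 : RingAut L) γ := by
  intro X hXU hcomm
  -- an automorphism in the support of `X` fixes `Γ`, hence `K`, hence lies in `G ∩ ℳ = 1`
  have hsupp : ∀ ν, X ν ≠ 0 → ν = 1 := fun ν hν =>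
    hsep ν ((hUK X hXU).1 ν hν) 1 M.one_mem <| by
      simpa using mem_of_forall_kSet_apply_eq G hGfin fun x hx =>
        apply_eq_of_forall_gammaSet G Λ hGfin hGΛ hfrac
          (fun γ hγ => apply_eq_of_skewMulR_comm (hcomm γ hγ) hν) hx
  obtain ⟨c, rfl⟩ : ∃ c, X = single 1 c :=
    ⟨X 1, eq_single_iff.mpr
      ⟨fun ν hν => Finset.mem_singleton.mpr (hsupp ν (mem_support_iff.mp hν)), rfl⟩⟩
  have hcK : c ∈ KSet G := fun g hg => by
    simpa [gactR_single_one] using congrArg (· 1) ((hUK _ hXU).2 g hg)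
  have hpowU : ∀ n : ℕ, single 1 (c ^ n) ∈ U := by
    intro n
    induction n with
    | zero => simpa using hU1
    | succ n ih =>
      simpa [skewMulR_single_one_left, pow_succ] using (hUring _ ih _ hXU).2
  obtain ⟨T, hT⟩ := hOrd.elim LeftOrderProp.exists_finset_span RightOrderProp.exists_finset_span
  refine ⟨c, ⟨?_, hcK⟩, rfl⟩
  have := isNoetherian_lambdaSubmodule G Λ hnoeth
  exact mem_of_forall_pow_mem_span G Λ hfrac hicl T fun n =>
    hT _ (fun g hg => by rw [map_pow, hcK g hg]) (hpowU n)

/-- If `𝒰` is a left or right Galois `Γ`-order in `𝒦` (with the separation assumption),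
then `Γ` is maximal commutative in `𝒰`: any element of `𝒰` commuting with all of `Γ`
lies in `Γ`. -/
theorem stmt14 (L : Type*) [Field L] (G : Subgroup (RingAut L))
    (hGfin : (G : Set (RingAut L)).Finite)
    (M : Submonoid (RingAut L))
    (hsep : ∀ ν₁ ∈ M, ∀ ν₂ ∈ M, ν₁ * ν₂⁻¹ ∈ G → ν₁ = ν₂)
    (hinv : ∀ g ∈ G, ∀ ν ∈ M, g * ν * g⁻¹ ∈ M)
    (Λ : Subring L)
    (hGΛ : ∀ g ∈ G, ∀ a ∈ Λ, g a ∈ Λ)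
    (hMΛ : ∀ ν ∈ M, ∀ a : L, a ∈ Λ ↔ ν a ∈ Λ)
    (hfrac : ∀ x : L, ∃ a ∈ Λ, ∃ b ∈ Λ, b ≠ 0 ∧ x = a / b)
    (hicl : ∀ x : L, IsIntegral Λ x → x ∈ Λ)
    (hnoeth : ∀ N : AddSubgroup L, (N : Set L) ⊆ (Λ : Set L) →
      (∀ γ ∈ GammaSet G Λ, ∀ a ∈ N, γ * a ∈ N) →
      ∃ s : Finset L, (↑s : Set L) ⊆ (N : Set L) ∧
        ∀ y ∈ N, y ∈ AddSubgroup.closure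
          {z | ∃ γ ∈ GammaSet G Λ, ∃ w ∈ (↑s : Set L), z = γ * w})
    (U : Set (RingAut L →₀ L))
    (hUK : ∀ X ∈ U, (∀ ν, X ν ≠ 0 → ν ∈ M) ∧ (∀ g ∈ G, gactR g X = X))
    (hU1 : Finsupp.single (1 : RingAut L) (1 : L) ∈ U)
    (hUring : ∀ X ∈ U, ∀ Y ∈ U, X - Y ∈ U ∧ skewMulR X Y ∈ U)
    (hΓU : ∀ γ ∈ GammaSet G Λ, Finsupp.single (1 : RingAut L) γ ∈ U)
    (hGalL : ∀ X : RingAut L →₀ L, (∀ ν, X ν ≠ 0 → ν ∈ M) → (∀ g ∈ G, gactR g X = X) →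
      X ∈ AddSubgroup.closure {Y | ∃ k ∈ KSet G, ∃ u ∈ U, Y = lsm k u})
    (hGalR : ∀ X : RingAut L →₀ L, (∀ ν, X ν ≠ 0 → ν ∈ M) → (∀ g ∈ G, gactR g X = X) →
      X ∈ AddSubgroup.closure {Y | ∃ k ∈ KSet G, ∃ u ∈ U, Y = rsm u k})
    (hOrd : LeftOrderProp G M Λ U ∨ RightOrderProp G M Λ U) :
    ∀ X ∈ U, (∀ γ ∈ GammaSet G Λ,
        skewMulR X (Finsupp.single (1 : RingAut L) γ)
          = skewMulR (Finsupp.single (1 : RingAut L) γ) X) →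
      ∃ γ ∈ GammaSet G Λ, X = Finsupp.single (1 : RingAut L) γ :=
  stmt14_general L G hGfin M hsep Λ hGΛ hfrac hicl hnoeth U hUK hU1 hUring hOrd
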